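/- arXiv:2404.10888 — 5 statements merged into one kernel-verified Lean document; each statement's English description precedes it below -/
import Mathlib

section
/- If G2 is a graph in which every triangle shares exactly one of its edges with exactly one other triangle (i.e., each edge lies in at most two triangles, and each triangle has exactly one edge lying in two triangles), then G2 does not contain the complement of P4 + P1 (the disjoint union of a 4-vertex path and an isolated vertex) as a subgraph. -/
/-- The complement of `P4 + P1` (path on vertices 0-1-2-3 plus isolated vertex 4),
as a concrete graph on `Fin 5`. -/
def P4P1c : SimpleGraph (Fin 5) :=
  SimpleGraph.fromEdgeSet {s(0, 2), s(0, 3), s(1, 3), s(0, 4), s(1, 4), s(2, 4), s(3, 4)}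

/-- If in `G2` every edge lies in at most two triangles, and every
triangle has exactly one edge lying in two triangles, then `G2` contains no
(not necessarily induced) subgraph isomorphic to `(P4 + P1)ᶜ`. -/
theorem no_P4P1c_subgraph {V : Type*} [Fintype V] (G2 : SimpleGraph V)
    -- every edge lies in at most two triangles:
    (hEdge : ∀ u v : V, G2.Adj u v →
      ∀ w1 w2 w3 : V, (G2.Adj u w1 ∧ G2.Adj v w1) → (G2.Adj u w2 ∧ G2.Adj v w2) →
        (G2.Adj u w3 ∧ G2.Adj v w3) → w1 = w2 ∨ w1 = w3 ∨ w2 = w3)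
    -- every triangle has exactly one edge lying in two triangles:
    (hTri : ∀ a b c : V, G2.Adj a b → G2.Adj b c → G2.Adj a c →
      ((∃ w, w ≠ c ∧ G2.Adj a w ∧ G2.Adj b w) ∧
        ¬(∃ w, w ≠ a ∧ G2.Adj b w ∧ G2.Adj c w) ∧
        ¬(∃ w, w ≠ b ∧ G2.Adj a w ∧ G2.Adj c w)) ∨
      (¬(∃ w, w ≠ c ∧ G2.Adj a w ∧ G2.Adj b w) ∧
        (∃ w, w ≠ a ∧ G2.Adj b w ∧ G2.Adj c w) ∧
        ¬(∃ w, w ≠ b ∧ G2.Adj a w ∧ G2.Adj c w)) ∨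
      (¬(∃ w, w ≠ c ∧ G2.Adj a w ∧ G2.Adj b w) ∧
        ¬(∃ w, w ≠ a ∧ G2.Adj b w ∧ G2.Adj c w) ∧
        (∃ w, w ≠ b ∧ G2.Adj a w ∧ G2.Adj c w))) :
    ¬ ∃ f : Fin 5 → V, Function.Injective f ∧
      ∀ i j : Fin 5, P4P1c.Adj i j → G2.Adj (f i) (f j) := by
  rintro ⟨f, hinj, hadj⟩
  have adj : ∀ i j : Fin 5, P4P1c.Adj i j → G2.Adj (f i) (f j) := hadj
  have h02 : G2.Adj (f 0) (f 2) := adj 0 2 (by simp [P4P1c])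
  have h03 : G2.Adj (f 0) (f 3) := adj 0 3 (by simp [P4P1c])
  have h13 : G2.Adj (f 1) (f 3) := adj 1 3 (by simp [P4P1c])
  have h04 : G2.Adj (f 0) (f 4) := adj 0 4 (by simp [P4P1c])
  have h14 : G2.Adj (f 1) (f 4) := adj 1 4 (by simp [P4P1c])
  have h24 : G2.Adj (f 2) (f 4) := adj 2 4 (by simp [P4P1c])
  have h34 : G2.Adj (f 3) (f 4) := adj 3 4 (by simp [P4P1c])
  -- triangle (f 0, f 4, f 3)
  have hab : ∃ w, w ≠ f 3 ∧ G2.Adj (f 0) w ∧ G2.Adj (f 4) w :=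
    ⟨f 2, fun h => by simpa using hinj h, h02, h24.symm⟩
  have hbc : ∃ w, w ≠ f 0 ∧ G2.Adj (f 4) w ∧ G2.Adj (f 3) w :=
    ⟨f 1, fun h => by simpa using hinj h, h14.symm, h13.symm⟩
  rcases hTri (f 0) (f 4) (f 3) h04 h34.symm h03 with ⟨_, h, _⟩ | ⟨h, _, _⟩ | ⟨h, _, _⟩
  · exact h hbc
  · exact h hab
  · exact h hab
end

section
/- Let G be a graph, let H and F be nonadjacent vertices of G, and suppose that G minus {H, F} can be partitioned into a set T of vertices each adjacent (in G) to both H and F, and an independent set I such that each vertex of I is adjacent to at most one of H, F and to no vertex of I. Form G' by adding new vertices W1, W2 and edges HW1, W1W2, W2F. If G is chordal, then G' contains no even hole. -/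
open SimpleGraph
open Fin.CommRing Fin.NatCast Fin.IntCast

/-- Let `G` be chordal with nonadjacent vertices `h`, `f`, such that
`V \ {h, f}` is partitioned into a set `T` of vertices adjacent to both `h` and `f`,
and an independent set `I` whose vertices are adjacent to at most one of `h`, `f`.
Then the graph `G'` obtained by adding new vertices `w1, w2` and edges
`h-w1`, `w1-w2`, `w2-f` contains no even hole. -/
theorem no_even_hole_of_partition {V : Type*} [Fintype V] (G : SimpleGraph V)
    (h f : V) (hne : h ≠ f) (hhf : ¬ G.Adj h f)
    (T I : Set V)
    (hcover : T ∪ I = {v : V | v ≠ h ∧ v ≠ f})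
    (hdisj : Disjoint T I)
    (hT : ∀ t ∈ T, G.Adj t h ∧ G.Adj t f)
    (hIone : ∀ i ∈ I, ¬ (G.Adj i h ∧ G.Adj i f))
    (hIind : ∀ i ∈ I, ∀ j ∈ I, ¬ G.Adj i j)
    (hchordal : ∀ n : ℕ, 4 ≤ n → IsEmpty (cycleGraph n ↪g G)) :
    ∀ n : ℕ, 4 ≤ n → Even n →
      IsEmpty (cycleGraph n ↪g
        (SimpleGraph.fromRel (fun x y : V ⊕ Fin 2 =>
          match x, y with
          | Sum.inl a, Sum.inl b => G.Adj a b
          | Sum.inl a, Sum.inr i => (i = 0 ∧ a = h) ∨ (i = 1 ∧ a = f)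
          | Sum.inr i, Sum.inr j => i = 0 ∧ j = 1
          | _, _ => False))) := by
  intro n hn4 heven
  set G' : SimpleGraph (V ⊕ Fin 2) := SimpleGraph.fromRel (fun x y : V ⊕ Fin 2 =>
          match x, y with
          | Sum.inl a, Sum.inl b => G.Adj a b
          | Sum.inl a, Sum.inr i => (i = 0 ∧ a = h) ∨ (i = 1 ∧ a = f)
          | Sum.inr i, Sum.inr j => i = 0 ∧ j = 1
          | _, _ => False) with hG'
  obtain ⟨m, rfl⟩ : ∃ m, n = m + 4 := ⟨n - 4, by omega⟩
  rw [Nat.even_iff] at heven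
  -- adjacency facts about G'
  have hLL : ∀ a b : V, G'.Adj (Sum.inl a) (Sum.inl b) ↔ G.Adj a b := by
    intro a b
    rw [hG', fromRel_adj]
    constructor
    · rintro ⟨-, hab | hab⟩
      · exact hab
      · exact hab.symm
    · intro hab
      exact ⟨by simp [hab.ne], Or.inl hab⟩
  have hclass : ∀ (x : V ⊕ Fin 2) (a : V), G'.Adj x (Sum.inl a) →
      (x = Sum.inr 0 ∧ a = h) ∨ (x = Sum.inr 1 ∧ a = f) ∨
      ∃ b, x = Sum.inl b ∧ G.Adj b a := by
    intro x a hx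
    rcases x with b | j
    · exact Or.inr (Or.inr ⟨b, rfl, ((hLL b a).mp hx)⟩)
    · rw [hG', fromRel_adj] at hx
      fin_cases j
      · simp only [show ((0 : Fin 2) = 0 ∧ a = h) ∨ ((0 : Fin 2) = 1 ∧ a = f) ↔ a = h by simp] at hx
        left; refine ⟨rfl, ?_⟩
        rcases hx.2 with h1 | h1
        · simp at h1
        · rcases h1 with (⟨_, rfl⟩ | ⟨h2, _⟩)
          · rfl
          · simp at h2
      · right; left; refine ⟨rfl, ?_⟩
        rcases hx.2 with h1 | h1
        · simp at h1
        · rcases h1 with (⟨h2, _⟩ | ⟨_, rfl⟩)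
          · simp at h2
          · rfl
  have hnbr0 : ∀ x : V ⊕ Fin 2, G'.Adj x (Sum.inr 0) → x = Sum.inl h ∨ x = Sum.inr 1 := by
    intro x hx
    rw [hG', fromRel_adj] at hx
    rcases x with b | j
    · rcases hx.2 with h1 | h1
      · rcases h1 with (⟨_, rfl⟩ | ⟨h2, _⟩)
        · exact Or.inl rfl
        · simp at h2
      · simp at h1
    · fin_cases j
      · simp at hx
      · exact Or.inr rfl
  have hnbr1 : ∀ x : V ⊕ Fin 2, G'.Adj x (Sum.inr 1) → x = Sum.inl f ∨ x = Sum.inr 0 := by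
    intro x hx
    rw [hG', fromRel_adj] at hx
    rcases x with b | j
    · rcases hx.2 with h1 | h1
      · rcases h1 with (⟨h2, _⟩ | ⟨_, rfl⟩)
        · simp at h2
        · exact Or.inl rfl
      · simp at h1
    · fin_cases j
      · exact Or.inr rfl
      · simp at hx
  -- Fin (m+4) arithmetic facts
  have hdvd : ∀ k : ℕ, 0 < k → (k : Fin (m+4)) = 0 → (m+4) ∣ k := by
    intro k hk hq
    exact Fin.natCast_eq_zero.mp hq
  have hne1 : (1 : Fin (m+4)) ≠ 0 := by
    intro hq
    have := hdvd 1 (by norm_num) (by push_cast; exact hq)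
    have := Nat.le_of_dvd (by norm_num) this
    omega
  have hne2 : (2 : Fin (m+4)) ≠ 0 := by
    intro hq
    have := hdvd 2 (by norm_num) (by push_cast; exact hq)
    have := Nat.le_of_dvd (by norm_num) this
    omega
  have hne3 : (3 : Fin (m+4)) ≠ 0 := by
    intro hq
    have h3 := hdvd 3 (by norm_num) (by push_cast; exact hq)
    have := Nat.le_of_dvd (by norm_num) h3
    omega
  have hne5 : (5 : Fin (m+4)) ≠ 0 := by
    intro hq
    have h5 := hdvd 5 (by norm_num) (by push_cast; exact hq)
    have hle := Nat.le_of_dvd (by norm_num) h5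
    have hm : m ≤ 1 := by omega
    interval_cases m <;> omega
  have hadj_iff : ∀ u v : Fin (m+4), (cycleGraph (m+4)).Adj u v ↔ u - v = 1 ∨ v - u = 1 :=
    fun u v => cycleGraph_adj (n := m+2)
  have hconsec : ∀ i : Fin (m+4), (cycleGraph (m+4)).Adj i (i+1) := by
    intro i
    rw [hadj_iff]
    right; ring
  -- position inequalities
  have hne_sub2 : ∀ i : Fin (m+4), i - 2 ≠ i := by
    intro i hq; exact hne2 (by linear_combination -hq)
  have hne_add2 : ∀ i : Fin (m+4), i + 2 ≠ i := by
    intro i hq; exact hne2 (by linear_combination hq)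
  have hne_m1p1 : ∀ i : Fin (m+4), i - 1 ≠ i + 1 := by
    intro i hq; exact hne2 (by linear_combination -hq)
  have hne_m3m1 : ∀ i : Fin (m+4), i - 3 ≠ i - 1 := by
    intro i hq; exact hne2 (by linear_combination -hq)
  have hne_m3p2 : ∀ i : Fin (m+4), i - 3 ≠ i + 2 := by
    intro i hq; exact hne5 (by linear_combination -hq)
  have hnadj_m2p2 : ∀ i : Fin (m+4), ¬ (cycleGraph (m+4)).Adj (i-2) (i+2) := by
    intro i hq
    rw [hadj_iff] at hq
    rcases hq with hq | hq
    · exact hne5 (by linear_combination -hq)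
    · exact hne3 (by linear_combination hq)
  have hnadj_m3m1 : ∀ i : Fin (m+4), ¬ (cycleGraph (m+4)).Adj (i-3) (i-1) := by
    intro i hq
    rw [hadj_iff] at hq
    rcases hq with hq | hq
    · exact hne3 (by linear_combination -hq)
    · exact hne1 (by linear_combination hq)
  -- the key lemma: no hole through w1, w2
  have key : ∀ (e : cycleGraph (m+4) ↪g G') (i : Fin (m+4)),
      e i = Sum.inr 0 → e (i + 1) = Sum.inr 1 → False := by
    intro e i h0 h1
    -- e (i+2) = inl f
    have hf2 : e (i + 2) = Sum.inl f := by
      have hadj : G'.Adj (e (i + 2)) (Sum.inr 1) := by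
        rw [← h1]
        exact (e.map_rel_iff.mpr (by rw [hadj_iff]; right; ring)).symm
      rcases hnbr1 _ hadj with hx | hx
      · exact hx
      · exfalso
        rw [← h0] at hx
        exact hne_add2 i (e.injective hx)
    -- e (i-1) = inl h
    have hh1 : e (i - 1) = Sum.inl h := by
      have hadj : G'.Adj (e (i - 1)) (Sum.inr 0) := by
        rw [← h0]
        exact e.map_rel_iff.mpr (by rw [hadj_iff]; right; ring)
      rcases hnbr0 _ hadj with hx | hx
      · exact hx
      · exfalso
        rw [← h1] at hx
        exact hne_m1p1 i (e.injective hx)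
    -- e (i-2) = inl u with G.Adj u h
    have hadj2 : G'.Adj (e (i - 2)) (Sum.inl h) := by
      rw [← hh1]
      exact e.map_rel_iff.mpr (by rw [hadj_iff]; right; ring)
    rcases hclass _ _ hadj2 with ⟨hx, -⟩ | ⟨-, hx⟩ | ⟨u, hx, huh⟩
    · rw [← h0] at hx
      exact hne_sub2 i (e.injective hx)
    · exact hne hx
    · -- u ∈ T ∪ I
      have huf : u ≠ f := by
        rintro rfl
        exact hhf huh.symm
      have humem : u ∈ T ∪ I := by
        rw [hcover]
        exact ⟨huh.ne, huf⟩
      rcases humem with huT | huI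
      · -- u ∈ T : chord from i-2 to i+2
        have : G'.Adj (e (i - 2)) (e (i + 2)) := by
          rw [hx, hf2, hLL]
          exact (hT u huT).2
        exact hnadj_m2p2 i (e.map_rel_iff.mp this)
      · -- u ∈ I : look at e (i-3)
        have hadj3 : G'.Adj (e (i - 3)) (Sum.inl u) := by
          rw [← hx]
          have : i - 3 + 1 = i - 2 := by ring
          exact e.map_rel_iff.mpr (by rw [hadj_iff]; right; ring)
        rcases hclass _ _ hadj3 with ⟨-, hx2⟩ | ⟨-, hx2⟩ | ⟨x, hx2, hxu⟩
        · exact huh.ne hx2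
        · exact huf hx2
        · -- x cases
          by_cases hxeqh : x = h
          · subst hxeqh
            rw [← hh1] at hx2
            exact hne_m3m1 i (e.injective hx2)
          by_cases hxeqf : x = f
          · subst hxeqf
            rw [← hf2] at hx2
            exact hne_m3p2 i (e.injective hx2)
          have hxmem : x ∈ T ∪ I := by
            rw [hcover]; exact ⟨hxeqh, hxeqf⟩
          rcases hxmem with hxT | hxI
          · have : G'.Adj (e (i - 3)) (e (i - 1)) := by
              rw [hx2, hh1, hLL]
              exact (hT x hxT).1
            exact hnadj_m3m1 i (e.map_rel_iff.mp this)
          · exact hIind x hxI u huI hxu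
  -- reflection automorphism of the cycle
  haveI : NeZero (m+4) := ⟨by omega⟩
  let r : cycleGraph (m+4) ≃g cycleGraph (m+4) :=
    { toEquiv := Equiv.neg (Fin (m+4))
      map_rel_iff' := @fun a b => by
        simp only [Equiv.neg_apply]
        rw [hadj_iff, hadj_iff, neg_sub_neg, neg_sub_neg]
        exact or_comm }
  refine ⟨fun e => ?_⟩
  by_cases hall : ∀ i : Fin (m+4), ∃ v : V, e i = Sum.inl v
  · -- the hole avoids w1, w2 : contradiction with chordality
    choose φ hφ using hall
    have hinj : Function.Injective φ := by
      intro a b hab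
      apply e.injective
      rw [hφ a, hφ b, hab]
    have e2 : cycleGraph (m+4) ↪g G := by
      refine ⟨⟨φ, hinj⟩, @fun a b => ?_⟩
      show G.Adj (φ a) (φ b) ↔ _
      rw [← e.map_rel_iff, hφ a, hφ b, hLL]
    exact (hchordal (m+4) hn4).false e2
  · push_neg at hall
    obtain ⟨i, hi⟩ := hall
    have he' : ∀ k : Fin (m+4), (e.comp r.toEmbedding) k = e (-k) := fun k => rfl
    set e' : cycleGraph (m+4) ↪g G' := e.comp r.toEmbedding with he'def
    cases hsum : e i with
    | inl v => exact (hi v hsum).elim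
    | inr j =>
      have hj : j = 0 ∨ j = 1 := by
        rcases j with ⟨jv, hjv⟩
        have : jv = 0 ∨ jv = 1 := by omega
        rcases this with rfl | rfl
        · exact Or.inl rfl
        · exact Or.inr rfl
      rcases hj with rfl | rfl
      · -- e i = w1
        have hA : G'.Adj (e (i+1)) (Sum.inr 0) := by
          rw [← hsum]
          exact (e.map_rel_iff.mpr (hconsec i)).symm
        rcases hnbr0 _ hA with hx | hx
        · -- e (i+1) = inl h ; then e (i-1) = inr 1, use reflection
          have hB : G'.Adj (e (i-1)) (Sum.inr 0) := by
            rw [← hsum]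
            exact e.map_rel_iff.mpr (by rw [hadj_iff]; right; ring)
          rcases hnbr0 _ hB with hy | hy
          · exact hne_m1p1 i (e.injective (hy.trans hx.symm))
          · refine key e' (-i) ?_ ?_
            · rw [he', neg_neg]; exact hsum
            · rw [he']
              have : -(-i + 1) = i - 1 := by ring
              rw [this]; exact hy
        · exact key e i hsum hx
      · -- e i = w2
        have hA : G'.Adj (e (i-1)) (Sum.inr 1) := by
          rw [← hsum]
          exact e.map_rel_iff.mpr (by rw [hadj_iff]; right; ring)
        rcases hnbr1 _ hA with hx | hx
        · -- e (i-1) = inl f ; then e (i+1) = inr 0, use reflection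
          have hB : G'.Adj (e (i+1)) (Sum.inr 1) := by
            rw [← hsum]
            exact (e.map_rel_iff.mpr (hconsec i)).symm
          rcases hnbr1 _ hB with hy | hy
          · exact hne_m1p1 i (e.injective (hx.trans hy.symm))
          · refine key e' (-(i+1)) ?_ ?_
            · rw [he', neg_neg]; exact hy
            · rw [he']
              have : -(-(i+1) + 1) = i := by ring
              rw [this]; exact hsum
        · -- e (i-1) = inr 0
          refine key e (i-1) hx ?_
          have : i - 1 + 1 = i := by ring
          rw [this]; exact hsum
end

section
/- Let G be a graph with vertex set {H, F, S_X, S_X', K, K'} where H, S_X, K', F, K, S_X' is a 6-cycle (in this cyclic order) of edges, HF, S_X S_X', and K K' are non-edges. Then the only ways to add chords so that the resulting graph on these six vertices is chordal are: add exactly the three chords HK, K S_X, S_X F, or add exactly the three chords H K', K' S_X', S_X' F; moreover any chordal completion must contain one of these two triples of chords. -/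
open SimpleGraph

/-- The forced 6-cycle `H, S_X, K', F, K, S_X'` on `Fin 6`
(0 = H, 1 = S_X, 2 = K', 3 = F, 4 = K, 5 = S_X'). -/
def gadgetCycle : SimpleGraph (Fin 6) :=
  SimpleGraph.fromEdgeSet {s(0, 1), s(1, 2), s(2, 3), s(3, 4), s(4, 5), s(5, 0)}

/-- The positive orientation: chords `HK`, `K S_X`, `S_X F`. -/
def gadgetPos : SimpleGraph (Fin 6) :=
  SimpleGraph.fromEdgeSet {s(0, 1), s(1, 2), s(2, 3), s(3, 4), s(4, 5), s(5, 0),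
    s(0, 4), s(4, 1), s(1, 3)}

/-- The negative orientation: chords `H K'`, `K' S_X'`, `S_X' F`. -/
def gadgetNeg : SimpleGraph (Fin 6) :=
  SimpleGraph.fromEdgeSet {s(0, 1), s(1, 2), s(2, 3), s(3, 4), s(4, 5), s(5, 0),
    s(0, 2), s(2, 5), s(5, 3)}



/-! ### Auxiliary: Boolean adjacency for the two completions -/

def posB : Fin 6 → Fin 6 → Bool := fun a b =>
  (a.val, b.val) ∈ [(0,1),(1,0),(1,2),(2,1),(2,3),(3,2),(3,4),(4,3),(4,5),(5,4),(5,0),(0,5),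
    (0,4),(4,0),(4,1),(1,4),(1,3),(3,1)]

def negB : Fin 6 → Fin 6 → Bool := fun a b =>
  (a.val, b.val) ∈ [(0,1),(1,0),(1,2),(2,1),(2,3),(3,2),(3,4),(4,3),(4,5),(5,4),(5,0),(0,5),
    (0,2),(2,0),(2,5),(5,2),(5,3),(3,5)]

lemma pos_adj : ∀ a b, gadgetPos.Adj a b ↔ posB a b = true := by
  intro a b
  simp only [gadgetPos, fromEdgeSet_adj, Set.mem_insert_iff, Set.mem_singleton_iff, Sym2.eq_iff]
  fin_cases a <;> fin_cases b <;> decide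

lemma neg_adj : ∀ a b, gadgetNeg.Adj a b ↔ negB a b = true := by
  intro a b
  simp only [gadgetNeg, fromEdgeSet_adj, Set.mem_insert_iff, Set.mem_singleton_iff, Sym2.eq_iff]
  fin_cases a <;> fin_cases b <;> decide

/-! ### Induced-cycle certificates -/

abbrev IC4 (A : Fin 6 → Fin 6 → Bool) (a b c d : Fin 6) : Prop :=
  A a b = true ∧ A b c = true ∧ A c d = true ∧ A d a = true ∧
  A a c = false ∧ A b d = false ∧ a ≠ c ∧ b ≠ d

abbrev IC5 (A : Fin 6 → Fin 6 → Bool) (a b c d e : Fin 6) : Prop :=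
  A a b = true ∧ A b c = true ∧ A c d = true ∧ A d e = true ∧ A e a = true ∧
  A a c = false ∧ A a d = false ∧ A b d = false ∧ A b e = false ∧ A c e = false ∧
  a ≠ c ∧ a ≠ d ∧ b ≠ d ∧ b ≠ e ∧ c ≠ e

abbrev IC6 (A : Fin 6 → Fin 6 → Bool) (a b c d e f : Fin 6) : Prop :=
  A a b = true ∧ A b c = true ∧ A c d = true ∧ A d e = true ∧ A e f = true ∧ A f a = true ∧
  A a c = false ∧ A a d = false ∧ A a e = false ∧ A b d = false ∧ A b e = false ∧
  A b f = false ∧ A c e = false ∧ A c f = false ∧ A d f = false ∧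
  a ≠ c ∧ a ≠ d ∧ a ≠ e ∧ b ≠ d ∧ b ≠ e ∧ b ≠ f ∧ c ≠ e ∧ c ≠ f ∧ d ≠ f

lemma posIC4 : ∀ a b c d : Fin 6, ¬ IC4 posB a b c d := by decide
lemma posIC5 : ∀ a b c d e : Fin 6, ¬ IC5 posB a b c d e := by decide
set_option maxHeartbeats 4000000 in
lemma posIC6 : ∀ a b c d e f : Fin 6, ¬ IC6 posB a b c d e f := by decide

/-! ### Building cycle embeddings from explicit data -/

def mkC4 (G : SimpleGraph (Fin 6)) (a b c d : Fin 6)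
    (hab : G.Adj a b) (hbc : G.Adj b c) (hcd : G.Adj c d) (hda : G.Adj d a)
    (hac : ¬ G.Adj a c) (hbd : ¬ G.Adj b d) (nac : a ≠ c) (nbd : b ≠ d) :
    cycleGraph 4 ↪g G := by
  have nab := hab.ne
  have nbc := hbc.ne
  have ncd := hcd.ne
  have nda := hda.ne
  have hba := hab.symm; have hcb := hbc.symm; have hdc := hcd.symm; have had := hda.symm
  have hca : ¬ G.Adj c a := fun h => hac h.symm
  have hdb : ¬ G.Adj d b := fun h => hbd h.symm
  refine ⟨⟨![a,b,c,d], ?_⟩, ?_⟩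
  · intro i j hij
    fin_cases i <;> fin_cases j <;> simp_all
  · intro i j
    fin_cases i <;> fin_cases j <;>
      simp only [Matrix.cons_val_zero, Matrix.cons_val_one, Matrix.head_cons,
        Matrix.cons_val_two, Matrix.tail_cons, Matrix.cons_val_three,
        Matrix.cons_val_succ, Function.Embedding.coeFn_mk] <;>
      first
        | exact iff_of_true (by assumption) (by decide)
        | exact iff_of_false (by first | assumption | exact G.loopless.irrefl _) (by decide)

example : True := trivial
/-! ### From embeddings to certificates -/

lemma noIC4 {G : SimpleGraph (Fin 6)} {A : Fin 6 → Fin 6 → Bool}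
    (hA : ∀ a b, G.Adj a b ↔ A a b = true)
    (hIC : ∀ a b c d, ¬ IC4 A a b c d) (e : cycleGraph 4 ↪g G) : False := by
  have hm : ∀ i j : Fin 4, G.Adj (e i) (e j) ↔ (cycleGraph 4).Adj i j := fun i j => e.map_rel_iff
  have ht : ∀ i j : Fin 4, (cycleGraph 4).Adj i j → A (e i) (e j) = true :=
    fun i j h => (hA _ _).1 ((hm i j).2 h)
  have hf : ∀ i j : Fin 4, ¬ (cycleGraph 4).Adj i j → A (e i) (e j) = false := by
    intro i j h
    rcases Bool.eq_false_or_eq_true (A (e i) (e j)) with h' | h'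
    · exact absurd ((hm i j).1 ((hA _ _).2 h')) h
    · exact h'
  have hne : ∀ i j : Fin 4, i ≠ j → e i ≠ e j := fun i j h he => h (e.injective he)
  exact hIC (e 0) (e 1) (e 2) (e 3)
    ⟨ht 0 1 (by decide), ht 1 2 (by decide), ht 2 3 (by decide), ht 3 0 (by decide),
     hf 0 2 (by decide), hf 1 3 (by decide), hne 0 2 (by decide), hne 1 3 (by decide)⟩

lemma noIC5 {G : SimpleGraph (Fin 6)} {A : Fin 6 → Fin 6 → Bool}
    (hA : ∀ a b, G.Adj a b ↔ A a b = true)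
    (hIC : ∀ a b c d e, ¬ IC5 A a b c d e) (e : cycleGraph 5 ↪g G) : False := by
  have hm : ∀ i j : Fin 5, G.Adj (e i) (e j) ↔ (cycleGraph 5).Adj i j := fun i j => e.map_rel_iff
  have ht : ∀ i j : Fin 5, (cycleGraph 5).Adj i j → A (e i) (e j) = true :=
    fun i j h => (hA _ _).1 ((hm i j).2 h)
  have hf : ∀ i j : Fin 5, ¬ (cycleGraph 5).Adj i j → A (e i) (e j) = false := by
    intro i j h
    rcases Bool.eq_false_or_eq_true (A (e i) (e j)) with h' | h'
    · exact absurd ((hm i j).1 ((hA _ _).2 h')) h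
    · exact h'
  have hne : ∀ i j : Fin 5, i ≠ j → e i ≠ e j := fun i j h he => h (e.injective he)
  exact hIC (e 0) (e 1) (e 2) (e 3) (e 4)
    ⟨ht 0 1 (by decide), ht 1 2 (by decide), ht 2 3 (by decide), ht 3 4 (by decide),
     ht 4 0 (by decide),
     hf 0 2 (by decide), hf 0 3 (by decide), hf 1 3 (by decide), hf 1 4 (by decide),
     hf 2 4 (by decide),
     hne 0 2 (by decide), hne 0 3 (by decide), hne 1 3 (by decide), hne 1 4 (by decide),
     hne 2 4 (by decide)⟩

lemma noIC6 {G : SimpleGraph (Fin 6)} {A : Fin 6 → Fin 6 → Bool}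
    (hA : ∀ a b, G.Adj a b ↔ A a b = true)
    (hIC : ∀ a b c d e f, ¬ IC6 A a b c d e f) (e : cycleGraph 6 ↪g G) : False := by
  have hm : ∀ i j : Fin 6, G.Adj (e i) (e j) ↔ (cycleGraph 6).Adj i j := fun i j => e.map_rel_iff
  have ht : ∀ i j : Fin 6, (cycleGraph 6).Adj i j → A (e i) (e j) = true :=
    fun i j h => (hA _ _).1 ((hm i j).2 h)
  have hf : ∀ i j : Fin 6, ¬ (cycleGraph 6).Adj i j → A (e i) (e j) = false := by
    intro i j h
    rcases Bool.eq_false_or_eq_true (A (e i) (e j)) with h' | h'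
    · exact absurd ((hm i j).1 ((hA _ _).2 h')) h
    · exact h'
  have hne : ∀ i j : Fin 6, i ≠ j → e i ≠ e j := fun i j h he => h (e.injective he)
  exact hIC (e 0) (e 1) (e 2) (e 3) (e 4) (e 5)
    ⟨ht 0 1 (by decide), ht 1 2 (by decide), ht 2 3 (by decide), ht 3 4 (by decide),
     ht 4 5 (by decide), ht 5 0 (by decide),
     hf 0 2 (by decide), hf 0 3 (by decide), hf 0 4 (by decide), hf 1 3 (by decide),
     hf 1 4 (by decide), hf 1 5 (by decide), hf 2 4 (by decide), hf 2 5 (by decide),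
     hf 3 5 (by decide),
     hne 0 2 (by decide), hne 0 3 (by decide), hne 0 4 (by decide), hne 1 3 (by decide),
     hne 1 4 (by decide), hne 1 5 (by decide), hne 2 4 (by decide), hne 2 5 (by decide),
     hne 3 5 (by decide)⟩

/-! ### The two completions are chordal -/

def posNegIso : gadgetPos ≃g gadgetNeg := by
  refine ⟨⟨![0,5,4,3,2,1], ![0,5,4,3,2,1], by decide, by decide⟩, ?_⟩
  intro a b
  rw [neg_adj, pos_adj]
  fin_cases a <;> fin_cases b <;> decide

lemma pos_empty : ∀ n : ℕ, 4 ≤ n → IsEmpty (cycleGraph n ↪g gadgetPos) := by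
  intro n hn
  constructor
  intro e
  have h6 : n ≤ 6 := by simpa using Fintype.card_le_of_embedding e.toEmbedding
  interval_cases n
  · exact noIC4 pos_adj posIC4 e
  · exact noIC5 pos_adj posIC5 e
  · exact noIC6 pos_adj posIC6 e

lemma neg_empty : ∀ n : ℕ, 4 ≤ n → IsEmpty (cycleGraph n ↪g gadgetNeg) := by
  intro n hn
  constructor
  intro e
  exact (pos_empty n hn).false (posNegIso.symm.toEmbedding.comp e)

/-! ### Building cycle embeddings (C5, C6) -/

def mkC5 (G : SimpleGraph (Fin 6)) (a b c d e : Fin 6)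
    (hab : G.Adj a b) (hbc : G.Adj b c) (hcd : G.Adj c d) (hde : G.Adj d e) (hea : G.Adj e a)
    (hac : ¬ G.Adj a c) (had : ¬ G.Adj a d) (hbd : ¬ G.Adj b d) (hbe : ¬ G.Adj b e)
    (hce : ¬ G.Adj c e)
    (nac : a ≠ c) (nad : a ≠ d) (nbd : b ≠ d) (nbe : b ≠ e) (nce : c ≠ e) :
    cycleGraph 5 ↪g G := by
  have nab := hab.ne
  have nbc := hbc.ne
  have ncd := hcd.ne
  have nde := hde.ne
  have nea := hea.ne
  have hba := hab.symm; have hcb := hbc.symm; have hdc := hcd.symm; have hed := hde.symm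
  have hae := hea.symm
  have hca : ¬ G.Adj c a := fun h => hac h.symm
  have hda : ¬ G.Adj d a := fun h => had h.symm
  have hdb : ¬ G.Adj d b := fun h => hbd h.symm
  have heb : ¬ G.Adj e b := fun h => hbe h.symm
  have hec : ¬ G.Adj e c := fun h => hce h.symm
  refine ⟨⟨![a,b,c,d,e], ?_⟩, ?_⟩
  · intro i j hij
    fin_cases i <;> fin_cases j <;> simp_all
  · intro i j
    fin_cases i <;> fin_cases j <;>
      simp only [Matrix.cons_val_zero, Matrix.cons_val_one, Matrix.head_cons,
        Matrix.cons_val_two, Matrix.tail_cons, Matrix.cons_val_three,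
        Matrix.cons_val_four, Matrix.cons_val_succ, Function.Embedding.coeFn_mk] <;>
      first
        | exact iff_of_true (by assumption) (by decide)
        | exact iff_of_false (by first | assumption | exact G.loopless.irrefl _) (by decide)

set_option maxHeartbeats 1000000 in
def mkC6 (G : SimpleGraph (Fin 6)) (a b c d e f : Fin 6)
    (hab : G.Adj a b) (hbc : G.Adj b c) (hcd : G.Adj c d) (hde : G.Adj d e) (hef : G.Adj e f)
    (hfa : G.Adj f a)
    (hac : ¬ G.Adj a c) (had : ¬ G.Adj a d) (hae : ¬ G.Adj a e) (hbd : ¬ G.Adj b d)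
    (hbe : ¬ G.Adj b e) (hbf : ¬ G.Adj b f) (hce : ¬ G.Adj c e) (hcf : ¬ G.Adj c f)
    (hdf : ¬ G.Adj d f)
    (nac : a ≠ c) (nad : a ≠ d) (nae : a ≠ e) (nbd : b ≠ d) (nbe : b ≠ e) (nbf : b ≠ f)
    (nce : c ≠ e) (ncf : c ≠ f) (ndf : d ≠ f) :
    cycleGraph 6 ↪g G := by
  have nab := hab.ne
  have nbc := hbc.ne
  have ncd := hcd.ne
  have nde := hde.ne
  have nef := hef.ne
  have nfa := hfa.ne
  have hba := hab.symm; have hcb := hbc.symm; have hdc := hcd.symm; have hed := hde.symm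
  have hfe := hef.symm; have haf := hfa.symm
  have hca : ¬ G.Adj c a := fun h => hac h.symm
  have hda : ¬ G.Adj d a := fun h => had h.symm
  have hea : ¬ G.Adj e a := fun h => hae h.symm
  have hdb : ¬ G.Adj d b := fun h => hbd h.symm
  have heb : ¬ G.Adj e b := fun h => hbe h.symm
  have hfb : ¬ G.Adj f b := fun h => hbf h.symm
  have hec : ¬ G.Adj e c := fun h => hce h.symm
  have hfc : ¬ G.Adj f c := fun h => hcf h.symm
  have hfd : ¬ G.Adj f d := fun h => hdf h.symm
  have v0 : ![a,b,c,d,e,f] 0 = a := rfl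
  have v1 : ![a,b,c,d,e,f] 1 = b := rfl
  have v2 : ![a,b,c,d,e,f] 2 = c := rfl
  have v3 : ![a,b,c,d,e,f] 3 = d := rfl
  have v4 : ![a,b,c,d,e,f] 4 = e := rfl
  have v5 : ![a,b,c,d,e,f] 5 = f := rfl
  refine ⟨⟨![a,b,c,d,e,f], ?_⟩, ?_⟩
  · intro i j hij
    fin_cases i <;> fin_cases j <;>
      simp only [v0, v1, v2, v3, v4, v5] at hij <;>
      first
        | rfl
        | exact absurd hij (by assumption)
        | exact absurd hij.symm (by assumption)
  · intro i j
    fin_cases i <;> fin_cases j <;>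
      simp only [v0, v1, v2, v3, v4, v5, Function.Embedding.coeFn_mk] <;>
      first
        | exact iff_of_true (by assumption) (by decide)
        | exact iff_of_false (by first | assumption | exact G.loopless.irrefl _) (by decide)

/-- A graph on the six gadget vertices containing the forced 6-cycle
`H, S_X, K', F, K, S_X'` and avoiding the forbidden pairs `HF`, `S_X S_X'`, `K K'`
is chordal iff it is exactly the cycle plus the positive triple of chords, or
exactly the cycle plus the negative triple of chords. -/
theorem gadget_two_orientations (G : SimpleGraph (Fin 6))
    (hsup : gadgetCycle ≤ G)
    (hHF : ¬ G.Adj 0 3) (hSS : ¬ G.Adj 1 5) (hKK : ¬ G.Adj 2 4) :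
    (∀ n : ℕ, 4 ≤ n → IsEmpty (cycleGraph n ↪g G)) ↔
      (G = gadgetPos ∨ G = gadgetNeg) := by
  constructor
  · intro h
    have h01 : G.Adj 0 1 := hsup (by simp [gadgetCycle])
    have h12 : G.Adj 1 2 := hsup (by simp [gadgetCycle])
    have h23 : G.Adj 2 3 := hsup (by simp [gadgetCycle])
    have h34 : G.Adj 3 4 := hsup (by simp [gadgetCycle])
    have h45 : G.Adj 4 5 := hsup (by simp [gadgetCycle])
    have h50 : G.Adj 5 0 := hsup (by simp [gadgetCycle])
    have hFH : ¬ G.Adj 3 0 := fun h' => hHF h'.symm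
    have hSS' : ¬ G.Adj 5 1 := fun h' => hSS h'.symm
    have hKK' : ¬ G.Adj 4 2 := fun h' => hKK h'.symm
    have h4 := (h 4 (by norm_num)).false
    have h5 := (h 5 (by norm_num)).false
    have h6 := (h 6 (by norm_num)).false
    by_cases e14 : G.Adj 1 4
    · -- positive orientation
      left
      have e04 : G.Adj 0 4 := by
        by_contra e04
        exact h4 (mkC4 G 0 1 4 5 h01 e14 h45 h50 e04 hSS (by decide) (by decide))
      have e13 : G.Adj 1 3 := by
        by_contra e13
        exact h4 (mkC4 G 1 2 3 4 h12 h23 h34 e14.symm e13 hKK (by decide) (by decide))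
      have n02 : ¬ G.Adj 0 2 := fun e02 =>
        h4 (mkC4 G 0 2 3 4 e02 h23 h34 e04.symm hHF hKK (by decide) (by decide))
      have n25 : ¬ G.Adj 2 5 := fun e25 =>
        h4 (mkC4 G 2 5 0 1 e25 h50 h01 h12 (fun h' => n02 h'.symm) hSS'
          (by decide) (by decide))
      have n35 : ¬ G.Adj 3 5 := fun e35 =>
        h4 (mkC4 G 3 5 0 1 e35 h50 h01 e13 hFH hSS' (by decide) (by decide))
      have hsymm : ∀ a b : Fin 6, G.Adj a b → G.Adj b a := fun a b h' => h'.symm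
      have h10 := h01.symm; have h21 := h12.symm; have h32 := h23.symm
      have h43 := h34.symm; have h54 := h45.symm; have h05 := h50.symm
      have e40 := e04.symm; have e41 := e14.symm; have e31 := e13.symm
      have n20 : ¬ G.Adj 2 0 := fun h' => n02 h'.symm
      have n52 : ¬ G.Adj 5 2 := fun h' => n25 h'.symm
      have n53 : ¬ G.Adj 5 3 := fun h' => n35 h'.symm
      ext a b
      rw [pos_adj]
      fin_cases a <;> fin_cases b <;>
        first
          | exact iff_of_true (by assumption) (by decide)
          | exact iff_of_false (by first | assumption | exact G.loopless.irrefl _) (by decide)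
    · by_cases e25 : G.Adj 2 5
      · -- negative orientation
        right
        have e02 : G.Adj 0 2 := by
          by_contra e02
          exact h4 (mkC4 G 5 0 1 2 h50 h01 h12 e25 hSS' e02
            (by decide) (by decide))
        have e35 : G.Adj 3 5 := by
          by_contra e35
          exact h4 (mkC4 G 2 3 4 5 h23 h34 h45 e25.symm hKK e35 (by decide) (by decide))
        have n13 : ¬ G.Adj 1 3 := fun e13 =>
          h4 (mkC4 G 1 3 5 0 e13 e35 h50 h01 hSS hFH (by decide) (by decide))
        have n04 : ¬ G.Adj 0 4 := fun e04 =>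
          h4 (mkC4 G 0 4 3 2 e04 h34.symm h23.symm e02.symm hHF hKK'
            (by decide) (by decide))
        have h10 := h01.symm; have h21 := h12.symm; have h32 := h23.symm
        have h43 := h34.symm; have h54 := h45.symm; have h05 := h50.symm
        have e20 := e02.symm; have e52 := e25.symm; have e53 := e35.symm
        have n31 : ¬ G.Adj 3 1 := fun h' => n13 h'.symm
        have n40 : ¬ G.Adj 4 0 := fun h' => n04 h'.symm
        have n41 : ¬ G.Adj 4 1 := fun h' => e14 h'.symm
        ext a b
        rw [neg_adj]
        fin_cases a <;> fin_cases b <;>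
          first
            | exact iff_of_true (by assumption) (by decide)
            | exact iff_of_false (by first | assumption | exact G.loopless.irrefl _) (by decide)
      · -- no orientation chord: contradiction
        exfalso
        by_cases e13 : G.Adj 1 3
        · by_cases e04 : G.Adj 0 4
          · exact h4 (mkC4 G 0 1 3 4 h01 e13 h34 e04.symm hHF e14 (by decide) (by decide))
          · by_cases e35 : G.Adj 3 5
            · exact h4 (mkC4 G 1 3 5 0 e13 e35 h50 h01 hSS hFH (by decide) (by decide))
            · exact h5 (mkC5 G 0 1 3 4 5 h01 e13 h34 h45 h50 hHF e04 e14 hSS e35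
                (by decide) (by decide) (by decide) (by decide) (by decide))
        · by_cases e02 : G.Adj 0 2
          · by_cases e04 : G.Adj 0 4
            · exact h4 (mkC4 G 0 2 3 4 e02 h23 h34 e04.symm hHF hKK (by decide) (by decide))
            · by_cases e35 : G.Adj 3 5
              · exact h4 (mkC4 G 0 2 3 5 e02 h23 e35 h50 hHF e25 (by decide) (by decide))
              · exact h5 (mkC5 G 0 2 3 4 5 e02 h23 h34 h45 h50 hHF e04 hKK e25 e35
                  (by decide) (by decide) (by decide) (by decide) (by decide))
          · by_cases e04 : G.Adj 0 4
            · exact h5 (mkC5 G 0 1 2 3 4 h01 h12 h23 h34 e04.symm e02 hHF e13 e14 hKK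
                (by decide) (by decide) (by decide) (by decide) (by decide))
            · by_cases e35 : G.Adj 3 5
              · exact h5 (mkC5 G 5 0 1 2 3 h50 h01 h12 h23 e35 hSS' (fun h' => e25 h'.symm)
                  e02 hHF e13 (by decide) (by decide) (by decide) (by decide) (by decide))
              · exact h6 (mkC6 G 0 1 2 3 4 5 h01 h12 h23 h34 h45 h50
                  e02 hHF e04 e13 e14 hSS hKK e25 e35
                  (by decide) (by decide) (by decide) (by decide) (by decide) (by decide)
                  (by decide) (by decide) (by decide))
  · rintro (rfl | rfl)
    · exact pos_empty
    · exact neg_empty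
end

section
/- Let T be a triangle-free graph and let M be a set of additional edges on the same vertex set, disjoint from E(T), such that every edge of M together with E(T) creates triangles only containing exactly one edge of M. Suppose moreover that in the graph T ∪ M, every triangle contains exactly one edge of M and two edges of T. If additionally every edge of T lies in at most two triangles of T ∪ M and every triangle of T ∪ M shares an edge with at most one other triangle, then T ∪ M contains no subgraph isomorphic to the complement of P4 + P1. -/
/-- Exactly one of three propositions holds. -/
def ExactlyOne (x y z : Prop) : Prop :=
  (x ∧ ¬y ∧ ¬z) ∨ (¬x ∧ y ∧ ¬z) ∨ (¬x ∧ ¬y ∧ z)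

/-- A triangle of `G`, as a 3-element set of pairwise adjacent vertices. -/
def IsTriangle {V : Type*} [DecidableEq V] (G : SimpleGraph V) (t : Finset V) : Prop :=
  t.card = 3 ∧ ∀ u ∈ t, ∀ v ∈ t, u ≠ v → G.Adj u v

lemma isTriangle_of_adj {V : Type*} [DecidableEq V] (G : SimpleGraph V) (a b c : V)
    (hab : G.Adj a b) (hac : G.Adj a c) (hbc : G.Adj b c) :
    IsTriangle G ({a, b, c} : Finset V) := by
  have h1 := hab.ne; have h2 := hac.ne; have h3 := hbc.ne
  constructor
  · rw [Finset.card_insert_of_notMem (by simp [h1, h2]),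
      Finset.card_insert_of_notMem (by simp [h3])]
    simp
  · intro u hu v hv huv
    simp only [Finset.mem_insert, Finset.mem_singleton] at hu hv
    rcases hu with rfl | rfl | rfl <;> rcases hv with rfl | rfl | rfl <;>
      first
        | exact absurd rfl huv
        | exact hab | exact hac | exact hbc
        | exact hab.symm | exact hac.symm | exact hbc.symm

/-- Let `T` be a triangle-free graph and `M` a set of optional edges
disjoint from `E(T)` such that in `T ∪ M` every triangle contains exactly one edge
of `M` and two edges of `T`, every edge of `T` lies in at most two triangles, and
every triangle shares an edge with at most one other triangle. Then `T ∪ M`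
contains no subgraph isomorphic to `(P4 + P1)ᶜ`. -/
theorem union_no_P4P1c_subgraph {V : Type*} [Fintype V] [DecidableEq V]
    (T : SimpleGraph V) (M : Set (Sym2 V))
    (hTfree : T.CliqueFree 3)
    (hdisj : Disjoint M T.edgeSet)
    (G : SimpleGraph V) (hG : G = T ⊔ SimpleGraph.fromEdgeSet M)
    -- every triangle of `G` contains exactly one edge of `M` and two edges of `T`:
    (hTriM : ∀ a b c : V, G.Adj a b → G.Adj b c → G.Adj a c →
      ExactlyOne (s(a, b) ∈ M) (s(b, c) ∈ M) (s(a, c) ∈ M) ∧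
      ExactlyOne (s(a, b) ∉ T.edgeSet) (s(b, c) ∉ T.edgeSet) (s(a, c) ∉ T.edgeSet))
    -- every edge of `T` lies in at most two triangles of `G`:
    (hEdge : ∀ u v : V, T.Adj u v →
      ∀ w1 w2 w3 : V, (G.Adj u w1 ∧ G.Adj v w1) → (G.Adj u w2 ∧ G.Adj v w2) →
        (G.Adj u w3 ∧ G.Adj v w3) → w1 = w2 ∨ w1 = w3 ∨ w2 = w3)
    -- every triangle of `G` shares an edge with at most one other triangle:
    (hShare : ∀ t t1 t2 : Finset V, IsTriangle G t → IsTriangle G t1 →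
      IsTriangle G t2 → t1 ≠ t → t2 ≠ t →
      (t ∩ t1).card = 2 → (t ∩ t2).card = 2 → t1 = t2) :
    ¬ ∃ f : Fin 5 → V, Function.Injective f ∧
      ∀ i j : Fin 5, P4P1c.Adj i j → G.Adj (f i) (f j) := by
  rintro ⟨f, hinj, hadj⟩
  -- adjacency facts in P4P1c
  have padj : ∀ i j : Fin 5,
      s(i, j) ∈ ({s(0, 2), s(0, 3), s(1, 3), s(0, 4), s(1, 4), s(2, 4), s(3, 4)} :
        Set (Sym2 (Fin 5))) → i ≠ j → P4P1c.Adj i j := by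
    intro i j hm hne
    rw [P4P1c, SimpleGraph.fromEdgeSet_adj]
    exact ⟨hm, hne⟩
  have h02 : G.Adj (f 0) (f 2) := hadj 0 2 (padj 0 2 (by simp) (by decide))
  have h03 : G.Adj (f 0) (f 3) := hadj 0 3 (padj 0 3 (by simp) (by decide))
  have h13 : G.Adj (f 1) (f 3) := hadj 1 3 (padj 1 3 (by simp) (by decide))
  have h04 : G.Adj (f 0) (f 4) := hadj 0 4 (padj 0 4 (by simp) (by decide))
  have h14 : G.Adj (f 1) (f 4) := hadj 1 4 (padj 1 4 (by simp) (by decide))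
  have h24 : G.Adj (f 2) (f 4) := hadj 2 4 (padj 2 4 (by simp) (by decide))
  have h34 : G.Adj (f 3) (f 4) := hadj 3 4 (padj 3 4 (by simp) (by decide))
  -- distinctness
  have d01 : f 0 ≠ f 1 := fun h => by exact absurd (hinj h) (by decide)
  have d02 : f 0 ≠ f 2 := fun h => by exact absurd (hinj h) (by decide)
  have d03 : f 0 ≠ f 3 := fun h => by exact absurd (hinj h) (by decide)
  have d04 : f 0 ≠ f 4 := fun h => by exact absurd (hinj h) (by decide)
  have d12 : f 1 ≠ f 2 := fun h => by exact absurd (hinj h) (by decide)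
  have d13 : f 1 ≠ f 3 := fun h => by exact absurd (hinj h) (by decide)
  have d14 : f 1 ≠ f 4 := fun h => by exact absurd (hinj h) (by decide)
  have d23 : f 2 ≠ f 3 := fun h => by exact absurd (hinj h) (by decide)
  have d24 : f 2 ≠ f 4 := fun h => by exact absurd (hinj h) (by decide)
  have d34 : f 3 ≠ f 4 := fun h => by exact absurd (hinj h) (by decide)
  -- three triangles
  have ht : IsTriangle G ({f 0, f 3, f 4} : Finset V) :=
    isTriangle_of_adj G _ _ _ h03 h04 h34
  have ht1 : IsTriangle G ({f 0, f 2, f 4} : Finset V) :=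
    isTriangle_of_adj G _ _ _ h02 h04 h24
  have ht2 : IsTriangle G ({f 1, f 3, f 4} : Finset V) :=
    isTriangle_of_adj G _ _ _ h13 h14 h34
  have hne1 : ({f 0, f 2, f 4} : Finset V) ≠ {f 0, f 3, f 4} := by
    intro h
    have : f 2 ∈ ({f 0, f 3, f 4} : Finset V) := h ▸ (by simp)
    simp only [Finset.mem_insert, Finset.mem_singleton] at this
    rcases this with h' | h' | h'
    exacts [d02 h'.symm, d23 h', d24 h']
  have hne2 : ({f 1, f 3, f 4} : Finset V) ≠ {f 0, f 3, f 4} := by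
    intro h
    have : f 1 ∈ ({f 0, f 3, f 4} : Finset V) := h ▸ (by simp)
    simp only [Finset.mem_insert, Finset.mem_singleton] at this
    rcases this with h' | h' | h'
    exacts [d01 h'.symm, d13 h', d14 h']
  have hi1 : (({f 0, f 3, f 4} : Finset V) ∩ {f 0, f 2, f 4}).card = 2 := by
    have : ({f 0, f 3, f 4} : Finset V) ∩ {f 0, f 2, f 4} = {f 0, f 4} := by
      ext x
      simp only [Finset.mem_inter, Finset.mem_insert, Finset.mem_singleton]
      constructor
      · rintro ⟨h1 | h1 | h1, h2 | h2 | h2⟩ <;> subst h1 <;>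
          first
            | exact Or.inl rfl
            | exact Or.inr rfl
            | exact absurd h2.symm d03
            | exact absurd h2.symm d23
            | exact absurd h2 d34
      · rintro (rfl | rfl) <;> simp
    rw [this, Finset.card_insert_of_notMem (by simp [d04]), Finset.card_singleton]
  have hi2 : (({f 0, f 3, f 4} : Finset V) ∩ {f 1, f 3, f 4}).card = 2 := by
    have : ({f 0, f 3, f 4} : Finset V) ∩ {f 1, f 3, f 4} = {f 3, f 4} := by
      ext x
      simp only [Finset.mem_inter, Finset.mem_insert, Finset.mem_singleton]
      constructor
      · rintro ⟨h1 | h1 | h1, h2 | h2 | h2⟩ <;> subst h1 <;>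
          first
            | exact Or.inl rfl
            | exact Or.inr rfl
            | exact absurd h2 d01
            | exact absurd h2 d03
            | exact absurd h2 d04
      · rintro (rfl | rfl) <;> simp
    rw [this, Finset.card_insert_of_notMem (by simp [d34]), Finset.card_singleton]
  have heq := hShare _ _ _ ht ht1 ht2 hne1 hne2 hi1 hi2
  have : f 2 ∈ ({f 1, f 3, f 4} : Finset V) := heq ▸ (by simp)
  simp only [Finset.mem_insert, Finset.mem_singleton] at this
  rcases this with h' | h' | h'
  exacts [d12 h'.symm, d23 h', d24 h']
end

section
/- Let G be a graph with no induced 4-cycle containing vertices K_X, K_Y, K_Z (pairwise adjacent), K_X', K_Y', K_Z' with edges K_Y'K_X, K_Z'K_Y, K_X'K_Z, and vertices H, F with F adjacent to all of K_X, K_Y, K_Z, K_X', K_Y', K_Z', H adjacent to K_X', K_Y', K_Z', H and F nonadjacent, K_X K_X', K_Y K_Y', K_Z K_Z' nonadjacent, and H nonadjacent to K_X, K_Y, K_Z. Then G must contain the edges K_X'K_Y', K_X'K_Z', and hence (using the 4-cycle on K_Z', K_Y, K_Z, K_X') the edge K_Y K_X'; but then {K_X, K_Y, K_X', K_Y'}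 induces a 4-cycle — a contradiction. I.e., no such graph G with no induced 4-cycle exists. -/
open SimpleGraph

lemma c4_aux {V : Type*} (G : SimpleGraph V)
    (hC4 : IsEmpty (cycleGraph 4 ↪g G)) (a b c d : V)
    (hac : a ≠ c) (hbd : b ≠ d)
    (ab : G.Adj a b) (bc : G.Adj b c) (cd : G.Adj c d) (da : G.Adj d a)
    (nac : ¬ G.Adj a c) (nbd : ¬ G.Adj b d) : False := by
  apply hC4.false
  refine ⟨⟨![a, b, c, d], ?_⟩, ?_⟩
  · intro i j hij
    fin_cases i <;> fin_cases j <;> simp_all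
  · intro i j
    fin_cases i <;> fin_cases j <;>
      first
        | exact iff_of_false (fun e => G.ne_of_adj e rfl) (by decide)
        | exact iff_of_true ab (by decide)
        | exact iff_of_true ab.symm (by decide)
        | exact iff_of_true bc (by decide)
        | exact iff_of_true bc.symm (by decide)
        | exact iff_of_true cd (by decide)
        | exact iff_of_true cd.symm (by decide)
        | exact iff_of_true da (by decide)
        | exact iff_of_true da.symm (by decide)
        | exact iff_of_false nac (by decide)
        | exact iff_of_false nbd (by decide)
        | exact iff_of_false (fun e => nac e.symm) (by decide)
        | exact iff_of_false (fun e => nbd e.symm) (by decide)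

/-- No graph with no induced 4-cycle contains the clause-gadget
configuration of a clause with three false literals: the forced edges among the
knees, head and foot, together with the listed non-edges, force an induced 4-cycle. -/
theorem no_c4free_clause_gadget {V : Type*} [Fintype V] (G : SimpleGraph V)
    (hC4 : IsEmpty (cycleGraph 4 ↪g G))
    (kx ky kz kx' ky' kz' h f : V)
    (hdist : Function.Injective ![kx, ky, kz, kx', ky', kz', h, f])
    -- triangle of active knees:
    (e1 : G.Adj kx ky) (e2 : G.Adj ky kz) (e3 : G.Adj kx kz)
    -- pendant edges:
    (e4 : G.Adj ky' kx) (e5 : G.Adj kz' ky) (e6 : G.Adj kx' kz)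
    -- the foot `f` is adjacent to all six knees:
    (e7 : G.Adj f kx) (e8 : G.Adj f ky) (e9 : G.Adj f kz)
    (e10 : G.Adj f kx') (e11 : G.Adj f ky') (e12 : G.Adj f kz')
    -- the head `h` is adjacent to the inactive knees:
    (e13 : G.Adj h kx') (e14 : G.Adj h ky') (e15 : G.Adj h kz')
    -- non-edges:
    (n1 : ¬ G.Adj h f)
    (n2 : ¬ G.Adj kx kx') (n3 : ¬ G.Adj ky ky') (n4 : ¬ G.Adj kz kz')
    (n5 : ¬ G.Adj h kx) (n6 : ¬ G.Adj h ky) (n7 : ¬ G.Adj h kz) :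
    False := by
  have d1 : kx' ≠ ky' := fun e => by
    have := hdist (a₁ := 3) (a₂ := 4) (by simpa using e); exact absurd this (by decide)
  have d2 : kx' ≠ kz' := fun e => by
    have := hdist (a₁ := 3) (a₂ := 5) (by simpa using e); exact absurd this (by decide)
  have d3 : ky ≠ kx' := fun e => by
    have := hdist (a₁ := 1) (a₂ := 3) (by simpa using e); exact absurd this (by decide)
  have d4 : kx ≠ kx' := fun e => by
    have := hdist (a₁ := 0) (a₂ := 3) (by simpa using e); exact absurd this (by decide)
  have d5 : h ≠ f := fun e => by
    have := hdist (a₁ := 6) (a₂ := 7) (by simpa using e); exact absurd this (by decide)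
  have d6 : kz' ≠ kz := fun e => by
    have := hdist (a₁ := 5) (a₂ := 2) (by simpa using e); exact absurd this (by decide)
  have d7 : ky ≠ ky' := fun e => by
    have := hdist (a₁ := 1) (a₂ := 4) (by simpa using e); exact absurd this (by decide)
  -- edge kx' ky':
  have a1 : G.Adj kx' ky' := by
    by_contra hn
    exact c4_aux G hC4 kx' h ky' f d1 d5 e13.symm e14 e11.symm e10 hn n1
  -- edge kx' kz':
  have a2 : G.Adj kx' kz' := by
    by_contra hn
    exact c4_aux G hC4 kx' h kz' f d2 d5 e13.symm e15 e12.symm e10 hn n1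
  -- edge ky kx' via cycle kz'-ky-kz-kx':
  have a3 : G.Adj ky kx' := by
    by_contra hn
    exact c4_aux G hC4 kz' ky kz kx' d6 d3 e5 e2 e6.symm a2 (fun e => n4 e.symm) hn
  -- final cycle kx-ky-kx'-ky':
  exact c4_aux G hC4 kx ky kx' ky' d4 d7 e1 a3 a1 e4 n2 n3
end
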